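/- Let ψ,φ,ψ̃,φ̃ > 0 on I with ψ,ψ̃ strictly increasing, φ,φ̃ strictly decreasing, ψ/φ → ∞ at x̄ and ψ/φ → 0 at x̲. Suppose ψ̃' = αψ + βφ and φ̃' = γψ + δφ with α,β ≥ 0, γ,δ ≤ 0, and suppose that for some fixed a∈I and all y > a one has (α − γ ψ̃'(a)/φ̃'(a)) ψ(y) + (β − δ ψ̃'(a)/φ̃'(a)) φ(y) > 0. Then α > 0. -/
import Mathlib


open Set Filter

/-- The two-case argument of Lemma A.1: with `ψ̃' = αψ + βφ`, `φ̃' = γψ + δφ`,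
`α,β ≥ 0`, `γ,δ ≤ 0`, `ψ̃'(a) > 0 > φ̃'(a)`, and the strict inequality
`(α − γψ̃'(a)/φ̃'(a))ψ(y) + (β − δψ̃'(a)/φ̃'(a))φ(y) > 0` for all `y > a`,
one concludes `α > 0`. -/
theorem stmt5
    (xl xu a α β γ δ : ℝ) (ψ φ ψt φt : ℝ → ℝ)
    (ha : a ∈ Ioo xl xu)
    (hψpos : ∀ x ∈ Ioo xl xu, 0 < ψ x) (hφpos : ∀ x ∈ Ioo xl xu, 0 < φ x)
    (hψtpos : ∀ x ∈ Ioo xl xu, 0 < ψt x) (hφtpos : ∀ x ∈ Ioo xl xu, 0 < φt x)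
    (hψmono : StrictMonoOn ψ (Ioo xl xu)) (hφanti : StrictAntiOn φ (Ioo xl xu))
    (hψtmono : StrictMonoOn ψt (Ioo xl xu)) (hφtanti : StrictAntiOn φt (Ioo xl xu))
    (htop : Tendsto (fun x => ψ x / φ x) (nhdsWithin xu (Ioo xl xu)) atTop)
    (hbot : Tendsto (fun x => ψ x / φ x) (nhdsWithin xl (Ioo xl xu)) (nhds 0))
    (hψtd : ∀ x ∈ Ioo xl xu, HasDerivAt ψt (α * ψ x + β * φ x) x)
    (hφtd : ∀ x ∈ Ioo xl xu, HasDerivAt φt (γ * ψ x + δ * φ x) x)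
    (hα : 0 ≤ α) (hβ : 0 ≤ β) (hγ : γ ≤ 0) (hδ : δ ≤ 0)
    (hpa : 0 < α * ψ a + β * φ a) (hqa : γ * ψ a + δ * φ a < 0)
    (hkin : ∀ y ∈ Ioo xl xu, a < y →
      0 < (α - γ * ((α * ψ a + β * φ a) / (γ * ψ a + δ * φ a))) * ψ y
          + (β - δ * ((α * ψ a + β * φ a) / (γ * ψ a + δ * φ a))) * φ y) :
    0 < α := by
  by_contra h
  have hα0 : α = 0 := le_antisymm (not_lt.mp h) hα
  subst hα0
  set k : ℝ := (0 * ψ a + β * φ a) / (γ * ψ a + δ * φ a) with hk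
  have hknum : 0 < 0 * ψ a + β * φ a := hpa
  have hkneg : k < 0 := div_neg_of_pos_of_neg hknum hqa
  rcases lt_or_eq_of_le hγ with hγlt | hγeq
  · -- γ < 0
    have hc1 : (0 : ℝ) - γ * k < 0 := by nlinarith
    set c1 := (0 : ℝ) - γ * k
    set c2 := β - δ * k
    have hane : xl < xu := lt_trans ha.1 ha.2
    haveI : (nhdsWithin xu (Ioo xl xu)).NeBot := right_nhdsWithin_Ioo_neBot hane
    have h1 : ∀ᶠ y in nhdsWithin xu (Ioo xl xu), y ∈ Ioo xl xu :=
      self_mem_nhdsWithin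
    have h2 : ∀ᶠ y in nhdsWithin xu (Ioo xl xu), a < y :=
      eventually_nhdsWithin_of_eventually_nhds
        (eventually_gt_nhds ha.2)
    have h3 : ∀ᶠ y in nhdsWithin xu (Ioo xl xu), max 0 (c2 / (-c1)) + 1 ≤ ψ y / φ y :=
      htop.eventually_ge_atTop _
    obtain ⟨y, hy1, hy2, hy3⟩ := (h1.and (h2.and h3)).exists
    have hφy := hφpos y hy1
    have hkey := hkin y hy1 hy2
    -- c1 * ψ y + c2 * φ y > 0, but ψ y / φ y large
    have hr : c2 / (-c1) < ψ y / φ y := by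
      have := le_max_right 0 (c2 / (-c1)); linarith
    have : c2 < (ψ y / φ y) * (-c1) := by
      rwa [div_lt_iff₀ (by linarith : (0:ℝ) < -c1)] at hr
    have hψy : ψ y = (ψ y / φ y) * φ y := by field_simp
    have hneg : c1 * (ψ y / φ y) + c2 < 0 := by nlinarith
    rw [hψy] at hkey
    nlinarith [mul_neg_of_neg_of_pos hneg hφy]
  · -- γ = 0
    subst hγeq
    have hδneg : δ < 0 := by
      have := hφpos a ha; nlinarith
    have hkval : k = β * φ a / (δ * φ a) := by simp [hk]
    have hφa := hφpos a ha
    have hkval2 : k = β / δ := by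
      rw [hkval, mul_div_mul_right _ _ (ne_of_gt hφa)]
    have hc2 : β - δ * k = 0 := by
      rw [hkval2, mul_div_cancel₀ _ (ne_of_lt hδneg)]; ring
    have hymem : (a + xu) / 2 ∈ Ioo xl xu :=
      ⟨by linarith [ha.1, ha.2], by linarith [ha.2]⟩
    have hya : a < (a + xu) / 2 := by linarith [ha.2]
    have := hkin _ hymem hya
    rw [hc2] at this
    simp at this
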